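/- In the game G_φ associated with a CNF formula φ, for every infinite play ρ starting at C₁ that never visits the sink state ⊥ and is won by every literal player L such that some vertex (C, L) with λ*(C,L)=1 is visited by ρ (i.e., every literal player whose vertices are visited wins ρ), the valuation ν_ρ defined by ν_ρ(x) = 1 iff some vertex (C, x) with positive literal x occurs infinitely often in ρ, satisfies φ. -/
import Mathlib


/-- An infinite path (play) in the directed graph with edge relation `E`. -/
def IsPlay {V : Type*} (E : V → V → Prop) (ρ : ℕ → V) : Prop := ∀ k, E (ρ k) (ρ (k + 1))

/-- The set of vertices occurring infinitely often. -/
def InfVisit {V : Type*} (ρ : ℕ → V) : Set V := {v | ∀ N, ∃ k, N ≤ k ∧ ρ k = v}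

/-- Vertices of the game `G_φ`: clause vertices, pair vertices `(C_j, L)`
(`L` a literal, encoded as a variable together with a polarity), and the sink `⊥`. -/
inductive Vtx (n m : ℕ) where
  | clause (j : Fin m)
  | pair (j : Fin m) (L : Fin n × Bool)
  | sink
deriving DecidableEq

/-- Players of `G_φ`: one player per literal, plus Solver. -/
inductive Player (n : ℕ) where
  | lit (L : Fin n × Bool)
  | solver
deriving DecidableEq

/-- The colorings of `G_φ`: Solver must avoid the sink, and the literal player `L`
must avoid vertices of the form `(C, L̄)`. -/
def kap {n m : ℕ} : Player n → Vtx n m → ℕ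
  | Player.solver, Vtx.sink => 1
  | Player.solver, _ => 2
  | Player.lit L, Vtx.pair _ L' => if L' = (L.1, !L.2) then 1 else 2
  | Player.lit _, _ => 2

/-- Player `i` (with coloring `κ`) wins the play `ρ` iff the least color seen
infinitely often is even. -/
def parityWin {V : Type*} (κ : V → ℕ) (ρ : ℕ → V) : Prop :=
  Even (sInf (κ '' InfVisit ρ))

/-- The edges of `G_φ`. -/
def Edge {n m : ℕ} (clauses : Fin m → Finset (Fin n × Bool)) :
    Vtx n m → Vtx n m → Prop
  | Vtx.clause j, Vtx.pair j' L => j' = j ∧ L ∈ clauses j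
  | Vtx.pair j _, Vtx.clause j' => (j' : Fin m).val = (j.val + 1) % m
  | Vtx.pair _ _, Vtx.sink => True
  | Vtx.sink, Vtx.sink => True
  | _, _ => False

lemma edge_from_clause {n m : ℕ} {clauses : Fin m → Finset (Fin n × Bool)}
    {j : Fin m} {v : Vtx n m} (h : Edge clauses (Vtx.clause j) v) :
    ∃ L ∈ clauses j, v = Vtx.pair j L := by
  cases v with
  | clause j' => simp [Edge] at h
  | pair j' L => obtain ⟨h1, h2⟩ := h; exact ⟨L, h2, by rw [h1]⟩
  | sink => simp [Edge] at h

lemma edge_from_pair {n m : ℕ} {clauses : Fin m → Finset (Fin n × Bool)}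
    {j : Fin m} {L : Fin n × Bool} {v : Vtx n m} (h : Edge clauses (Vtx.pair j L) v)
    (hs : v ≠ Vtx.sink) :
    ∃ j' : Fin m, (j' : ℕ) = (j + 1) % m ∧ v = Vtx.clause j' := by
  cases v with
  | clause j' => exact ⟨j', h, rfl⟩
  | pair j' L' => simp [Edge] at h
  | sink => exact absurd rfl hs

theorem stmt_13 {n m : ℕ} (hm : 0 < m) (clauses : Fin m → Finset (Fin n × Bool))
    (ρ : ℕ → Vtx n m) (hρ : IsPlay (Edge clauses) ρ)
    (h0 : ρ 0 = Vtx.clause ⟨0, hm⟩)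
    (hns : ∀ k, ρ k ≠ Vtx.sink)
    (hwin : ∀ L : Fin n × Bool, (∃ k j, ρ k = Vtx.pair j L) →
      parityWin (kap (Player.lit L)) ρ) :
    ∀ j : Fin m, ∃ L ∈ clauses j,
      ((∃ j' : Fin m, Vtx.pair j' (L.1, true) ∈ InfVisit ρ) ↔ L.2 = true) := by
  classical
  -- structure of the play
  have hstruct : ∀ k : ℕ, ∃ j : Fin m, (j : ℕ) = k % m ∧ ρ (2 * k) = Vtx.clause j := by
    intro k
    induction k with
    | zero => exact ⟨⟨0, hm⟩, by simp [Nat.zero_mod], h0⟩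
    | succ k ih =>
      obtain ⟨j, hj, hc⟩ := ih
      have e1 := hρ (2 * k); rw [hc] at e1
      obtain ⟨L, hL, hp⟩ := edge_from_clause e1
      have e2 := hρ (2 * k + 1); rw [hp] at e2
      obtain ⟨j', hj', hc'⟩ := edge_from_pair e2 (hns (2 * k + 1 + 1))
      refine ⟨j', ?_, ?_⟩
      · rw [hj', hj, Nat.mod_add_mod]
      · have : 2 * (k + 1) = 2 * k + 1 + 1 := by ring
        rw [this, hc']
  have hpairs : ∀ k : ℕ, ∃ j : Fin m, (j : ℕ) = k % m ∧
      ∃ L ∈ clauses j, ρ (2 * k + 1) = Vtx.pair j L := by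
    intro k
    obtain ⟨j, hj, hc⟩ := hstruct k
    have e1 := hρ (2 * k); rw [hc] at e1
    obtain ⟨L, hL, hp⟩ := edge_from_clause e1
    exact ⟨j, hj, L, hL, hp⟩
  intro j
  -- at positions 2*(t*m+j)+1 the play is at a pair vertex of clause j
  have hkey : ∀ t : ℕ, ∃ L ∈ clauses j, ρ (2 * (t * m + (j : ℕ)) + 1) = Vtx.pair j L := by
    intro t
    obtain ⟨j', hj', L, hL, hp⟩ := hpairs (t * m + (j : ℕ))
    have hmod : (t * m + (j : ℕ)) % m = (j : ℕ) := by
      rw [Nat.add_comm, Nat.add_mul_mod_self_right]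
      exact Nat.mod_eq_of_lt j.isLt
    have : j' = j := by
      apply Fin.ext; rw [hj', hmod]
    rw [this] at hL hp
    exact ⟨L, hL, hp⟩
  -- pigeonhole: some L recurs infinitely often
  set f : ℕ → Fin n × Bool := fun t => Classical.choose (hkey t) with hf
  have hfspec : ∀ t, f t ∈ clauses j ∧ ρ (2 * (t * m + (j : ℕ)) + 1) = Vtx.pair j (f t) := by
    intro t
    obtain ⟨h1, h2⟩ := Classical.choose_spec (hkey t)
    exact ⟨h1, h2⟩
  obtain ⟨L, hLinf⟩ := Finite.exists_infinite_fiber f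
  have hLfib : (f ⁻¹' {L}).Infinite := by
    exact Set.infinite_coe_iff.mp hLinf
  obtain ⟨t0, ht0⟩ := hLfib.nonempty
  have hLmem : L ∈ clauses j := by
    rw [Set.mem_preimage, Set.mem_singleton_iff] at ht0
    rw [← ht0]; exact (hfspec t0).1

  have hLinfvisit : Vtx.pair j L ∈ InfVisit ρ := by
    intro N
    obtain ⟨t, htfib, htN⟩ := hLfib.exists_gt N
    refine ⟨2 * (t * m + (j : ℕ)) + 1, ?_, ?_⟩
    · have : t ≤ t * m := Nat.le_mul_of_pos_right t hm
      omega
    · have := (hfspec t).2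
      rw [Set.mem_preimage, Set.mem_singleton_iff] at htfib
      rwa [htfib] at this
  -- L's player wins
  have hw : parityWin (kap (Player.lit L)) ρ := by
    apply hwin L
    obtain ⟨k, _, hk⟩ := hLinfvisit 0
    exact ⟨k, j, hk⟩
  -- winning means no complementary pair visited infinitely often
  have hnocomp : ∀ j' : Fin m, Vtx.pair j' (L.1, !L.2) ∉ InfVisit ρ := by
    intro j' hmem
    have h1 : (1 : ℕ) ∈ kap (Player.lit L) '' InfVisit ρ :=
      ⟨Vtx.pair j' (L.1, !L.2), hmem, by simp [kap]⟩
    have hle : sInf (kap (Player.lit L) '' InfVisit ρ) ≤ 1 := Nat.sInf_le h1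
    have heven := hw
    unfold parityWin at heven
    have h0' : sInf (kap (Player.lit L) '' InfVisit ρ) = 0 := by
      interval_cases h : sInf (kap (Player.lit L) '' InfVisit ρ)
      · rfl
      · simp [h] at heven
    have hmem0 : (0 : ℕ) ∈ kap (Player.lit L) '' InfVisit ρ := by
      rw [← h0']
      exact Nat.sInf_mem ⟨1, h1⟩
    obtain ⟨v, _, hv⟩ := hmem0
    cases v with
    | clause _ => simp [kap] at hv
    | pair _ L' => by_cases h : L' = (L.1, !L.2) <;> simp [kap, h] at hv
    | sink => simp [kap] at hv
  refine ⟨L, hLmem, ?_⟩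
  constructor
  · rintro ⟨j', hj'⟩
    by_contra hfalse
    have hL2 : L.2 = false := by
      cases h : L.2
      · rfl
      · exact absurd h hfalse
    have heq : (L.1, !L.2) = (L.1, true) := by rw [hL2]; rfl
    rw [← heq] at hj'
    exact hnocomp j' hj'
  · intro hL2
    refine ⟨j, ?_⟩
    have : (L.1, true) = L := Prod.ext rfl hL2.symm
    rw [this]
    exact hLinfvisit
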